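/- arXiv:2203.09861 — 3 statements merged into one kernel-verified Lean document; each statement's English description precedes it below -/
import Mathlib

section
/- Fix γ > −1. For every n ≥ 0 and every k ∈ ℤ, the function ψ_{n,k}^γ satisfies, on the interior of ∂₊S𝔻, the joint eigenequations 𝓣_γ ψ_{n,k}^γ = (n+1+γ)² ψ_{n,k}^γ and (1/i)∂_β ψ_{n,k}^γ = (n−2k) ψ_{n,k}^γ. -/
open MeasureTheory Complex Metric Real Set

noncomputable section

/-! ## Geometry of the Euclidean disk and its space of lines (fan-beam coordinates) -/

/-- The chord of the closed unit disk through the boundary point `exp (I β)` with incoming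
direction `exp (I (β + π + α))`, parametrized by arclength `t ∈ [0, 2 cos α]`. -/
def chord (β α t : ℝ) : ℂ :=
  Complex.exp ((β : ℂ) * Complex.I) +
    (t : ℂ) * Complex.exp (((β + π + α : ℝ) : ℂ) * Complex.I)

/-- The X-ray transform `I₀` in fan-beam coordinates. -/
def XRT (f : ℂ → ℂ) (β α : ℝ) : ℂ :=
  ∫ t in (0:ℝ)..(2 * Real.cos α), f (chord β α t)

/-- The fan-beam coordinate `α₋(z, θ)` of the unique chord through `z` with direction `exp (I θ)`,
determined by `sin α₋ = Im (z * exp (-I θ))`. -/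
def alpham (z : ℂ) (θ : ℝ) : ℝ :=
  Real.arcsin ((z * Complex.exp (-(θ : ℂ) * Complex.I)).im)

/-- The fan-beam coordinate `β₋(z, θ)`, determined by `β₋ + α₋ + π = θ`. -/
def betam (z : ℂ) (θ : ℝ) : ℝ := θ - π - alpham z θ

/-- Reduction modulo `2π` to the fundamental interval `(0, 2π]`. -/
def wrap (x : ℝ) : ℝ := toIocMod Real.two_pi_pos 0 x

/-- The backprojection operator `I₀^♯`. -/
def BP (g : ℝ × ℝ → ℂ) (z : ℂ) : ℂ :=
  ∫ θ in (0:ℝ)..(2 * π), g (wrap (betam z θ), alpham z θ)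

/-- The weighted backprojection operator `I₀^♯ μ^{-2γ-1}`, where `μ(β, α) = cos α`. -/
def BPW (γ : ℝ) (g : ℝ × ℝ → ℂ) : ℂ → ℂ :=
  BP fun p => ((Real.cos p.2 ^ (-(2 * γ) - 1) : ℝ) : ℂ) * g p

/-- The rectangle `(0, 2π] × [-π/2, π/2]` modelling the space of lines `∂₊S𝔻`. -/
def Rect : Set (ℝ × ℝ) := Set.Ioc (0:ℝ) (2 * π) ×ˢ Set.Icc (-(π / 2)) (π / 2)

/-- The measure `μ^{-2γ} dβ dα` on `∂₊S𝔻`, where `μ(β, α) = cos α`. -/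
def bdryMeasure (γ : ℝ) : Measure (ℝ × ℝ) :=
  ((volume : Measure (ℝ × ℝ)).restrict Rect).withDensity
    fun p => ENNReal.ofReal (Real.cos p.2 ^ (-(2 * γ)))

/-- The measure `d^γ dz` on the closed unit disk, where `d(z) = 1 - |z|²`. -/
def diskMeasure (γ : ℝ) : Measure ℂ :=
  ((volume : Measure ℂ).restrict (Metric.closedBall 0 1)).withDensity
    fun z => ENNReal.ofReal ((1 - ‖z‖ ^ 2) ^ γ)

/-- `L n` is the monic orthogonal polynomial of degree `n` on `[-1, 1]` for the weight
`(1 - x²)^(γ + 1/2)`. -/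
def IsMonicOrtho (γ : ℝ) (L : ℕ → Polynomial ℝ) : Prop :=
  ∀ n, (L n).Monic ∧ (L n).natDegree = n ∧
    ∀ m, m < n →
      (∫ x in (-1:ℝ)..(1:ℝ), (L n).eval x * x ^ m * (1 - x ^ 2) ^ (γ + 1/2)) = 0

/-- The functions `ψ_{n,k}^γ = μ^{2γ+1} ((-1)^n / 2π) e^{i(n-2k)(β+α)} L_n^γ (sin α)`. -/
def psiF (γ : ℝ) (L : ℕ → Polynomial ℝ) (n : ℕ) (k : ℤ) (p : ℝ × ℝ) : ℂ :=
  ((Real.cos p.2 ^ (2 * γ + 1) : ℝ) : ℂ) * (((-1 : ℝ) ^ n / (2 * π) : ℝ) : ℂ) *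
    Complex.exp (Complex.I * ((n : ℂ) - 2 * (k : ℂ)) * ((p.1 + p.2 : ℝ) : ℂ)) *
    (((L n).eval (Real.sin p.2) : ℝ) : ℂ)

/-- The generalized Zernike polynomials
`G_{n,k}^γ (z) = (1/2π) ∫₀^{2π} e^{i(n-2k)θ} L_n^γ ((i/2)(z̄ e^{iθ} - z e^{-iθ})) dθ`. -/
def GZ (γ : ℝ) (L : ℕ → Polynomial ℝ) (n : ℕ) (k : ℤ) (z : ℂ) : ℂ :=
  ((1 / (2 * π) : ℝ) : ℂ) * ∫ θ in (0:ℝ)..(2 * π),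
    Complex.exp (Complex.I * ((n : ℂ) - 2 * (k : ℂ)) * (θ : ℂ)) *
      Polynomial.aeval
        ((Complex.I / 2) *
          ((starRingEnd ℂ) z * Complex.exp ((θ : ℂ) * Complex.I) -
            z * Complex.exp (-(θ : ℂ) * Complex.I))) (L n)

/-- `L²(𝔻, d^γ dz)`-norm. -/
def dNorm (γ : ℝ) (f : ℂ → ℂ) : ℝ := Real.sqrt (∫ z, ‖f z‖ ^ 2 ∂(diskMeasure γ))

/-- `L²(∂₊S𝔻, μ^{-2γ} dβ dα)`-norm. -/
def bNorm (γ : ℝ) (g : ℝ × ℝ → ℂ) : ℝ := Real.sqrt (∫ p, ‖g p‖ ^ 2 ∂(bdryMeasure γ))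

/-- `G_{n,k}^γ` normalized to unit norm in `L²(𝔻, d^γ dz)`. -/
def Ghat (γ : ℝ) (L : ℕ → Polynomial ℝ) (n : ℕ) (k : ℤ) (z : ℂ) : ℂ :=
  (((dNorm γ (GZ γ L n k))⁻¹ : ℝ) : ℂ) * GZ γ L n k z

/-- `ψ_{n,k}^γ` normalized to unit norm in `L²(∂₊S𝔻, μ^{-2γ} dβ dα)`. -/
def psihat (γ : ℝ) (L : ℕ → Polynomial ℝ) (n : ℕ) (k : ℤ) (p : ℝ × ℝ) : ℂ :=
  (((bNorm γ (psiF γ L n k))⁻¹ : ℝ) : ℂ) * psiF γ L n k p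

/-- The squared singular values `(σ_{n,k}^γ)²`. -/
def sigSq (γ : ℝ) (n k : ℕ) : ℝ :=
  2 ^ (2 * γ + 2) * π * (n.choose k) *
    Real.Gamma ((n : ℝ) - k + γ + 1) * Real.Gamma ((k : ℝ) + γ + 1) /
      Real.Gamma ((n : ℝ) + 2 * γ + 2)

/-- The singular values `σ_{n,k}^γ ≥ 0`. -/
def sig (γ : ℝ) (n k : ℕ) : ℝ := Real.sqrt (sigSq γ n k)

/-- The Beta function `B(x,y) = Γ(x)Γ(y)/Γ(x+y)`. -/
def betaFn (x y : ℝ) : ℝ := Real.Gamma x * Real.Gamma y / Real.Gamma (x + y)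

/-! ## Differential operators -/

/-- Radial derivative `∂_ρ` in polar coordinates `z = ρ e^{iω}`. -/
def dRho (f : ℂ → ℂ) (z : ℂ) : ℂ :=
  deriv (fun r : ℝ => f ((r : ℂ) * Complex.exp ((z.arg : ℂ) * Complex.I))) ‖z‖

/-- Angular derivative `∂_ω` in polar coordinates `z = ρ e^{iω}`. -/
def dOmega (f : ℂ → ℂ) (z : ℂ) : ℂ :=
  deriv (fun w : ℝ => f ((‖z‖ : ℂ) * Complex.exp ((w : ℂ) * Complex.I))) z.arg

/-- The operator `𝓛_γ = -(1-ρ²)∂_ρ² - (ρ⁻¹ - (3+2γ)ρ)∂_ρ - ρ⁻²∂_ω² + (γ+1)²`. -/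
def Lop (γ : ℝ) (f : ℂ → ℂ) (z : ℂ) : ℂ :=
  -(1 - (‖z‖ : ℂ) ^ 2) * dRho (dRho f) z -
    ((‖z‖ : ℂ)⁻¹ - (3 + 2 * (γ : ℂ)) * (‖z‖ : ℂ)) * dRho f z -
    ((‖z‖ : ℂ) ^ 2)⁻¹ * dOmega (dOmega f) z + ((γ : ℂ) + 1) ^ 2 * f z

/-- `∂_β` on `∂₊S𝔻`. -/
def dBeta (g : ℝ × ℝ → ℂ) (p : ℝ × ℝ) : ℂ := deriv (fun b : ℝ => g (b, p.2)) p.1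

/-- `∂_α` on `∂₊S𝔻`. -/
def dAlpha (g : ℝ × ℝ → ℂ) (p : ℝ × ℝ) : ℂ := deriv (fun a : ℝ => g (p.1, a)) p.2

/-- The operator `T = ∂_β - ∂_α`. -/
def Tline (g : ℝ × ℝ → ℂ) (p : ℝ × ℝ) : ℂ := dBeta g p - dAlpha g p

/-- The power `μ^e = (cos α)^e` as a complex-valued function on `∂₊S𝔻`. -/
def muC (e : ℝ) (p : ℝ × ℝ) : ℂ := ((Real.cos p.2 ^ e : ℝ) : ℂ)

/-- The operator `𝓣_γ = -μ^{2γ} T μ^{-2γ} T + γ²`. -/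
def Tgam (γ : ℝ) (g : ℝ × ℝ → ℂ) (p : ℝ × ℝ) : ℂ :=
  -muC (2 * γ) p * Tline (fun q => muC (-(2 * γ)) q * Tline g q) p + (γ : ℂ) ^ 2 * g p

/-! ## Scattering relations and the space `C^∞_{α,+,+}(∂₊S𝔻)` -/

/-- The scattering relation `𝒮(β, α) = (β + π + 2α, π - α)`. -/
def Scat (p : ℝ × ℝ) : ℝ × ℝ := (p.1 + π + 2 * p.2, π - p.2)

/-- The antipodal scattering relation `𝒮_A(β, α) = (β + π + 2α, -α)`. -/
def ScatA (p : ℝ × ℝ) : ℝ × ℝ := (p.1 + π + 2 * p.2, -p.2)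

/-- Membership in `C^∞_{α,+,+}(∂₊S𝔻)`: `f`, given on the strip `ℝ × [-π/2, π/2]` (2π-periodically
in β), has an even extension through the scattering relation which is smooth on all of `∂S𝔻`
(modelled as a doubly 2π-periodic smooth function on `ℝ²` invariant under `𝒮`), and `f` is
invariant under the antipodal scattering relation. -/
def MemCapp (f : ℝ × ℝ → ℂ) : Prop :=
  ∃ F : ℝ × ℝ → ℂ, ContDiff ℝ (⊤ : ℕ∞) F ∧
    (∀ p : ℝ × ℝ, F (p.1 + 2 * π, p.2) = F p) ∧
    (∀ p : ℝ × ℝ, F (p.1, p.2 + 2 * π) = F p) ∧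
    (∀ p : ℝ × ℝ, F (Scat p) = F p) ∧
    (∀ p : ℝ × ℝ, p.2 ∈ Set.Icc (-(π / 2)) (π / 2) → F (ScatA p) = F p) ∧
    (∀ p : ℝ × ℝ, p.2 ∈ Set.Icc (-(π / 2)) (π / 2) → f p = F p)

/-- `C^∞(𝔻)`: smooth up to the boundary of the closed unit disk. -/
def CinfDisk (f : ℂ → ℂ) : Prop := ContDiffOn ℝ (⊤ : ℕ∞) f (Metric.closedBall 0 1)

end

/-!
Write `ψ_{n,k}^γ(β, α) = E(β + α) u(α)` with `E(t) = ((-1)^n / 2π) e^{i(n-2k)t}` and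
`u(α) = cos^{2γ+1} α · L_n(sin α)`. Then `∂_β` only sees `E`, while `T = ∂_β - ∂_α`
annihilates functions of `β + α` and acts as `-d/dα` on `u`; so
`𝓣_γ ψ = E · (-cos^{2γ} (cos^{-2γ} u')' + γ² u)`.
In the variable `x = sin α` this is `E cos^{2γ+1} α` times
`(2γ + 1 + γ²) L_n - (1 - x²) L_n'' + (2γ + 3) x L_n'`, and the Gegenbauer equation
`-(1 - x²) L_n'' + (2γ + 3) x L_n' = n(n + 2γ + 2) L_n` turns this into `(n + 1 + γ)² ψ`.

The Gegenbauer equation is read off from orthogonality: the operator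
`D = (1 - x²) d²/dx² - (2γ + 3) x d/dx` is symmetric for the weight `(1 - x²)^{γ+1/2}` (the
boundary term `(1 - x²)^{γ+3/2} (P'Q - PQ')` vanishes at `±1`) and does not raise degrees, so
`D L_n + n(n + 2γ + 2) L_n` has degree `< n` (its `xⁿ` coefficient cancels) and is orthogonal
to every polynomial of degree `< n`, itself included.
-/

noncomputable section

open Polynomial Filter Topology

def gegenbauerOp (γ : ℝ) (P : ℝ[X]) : ℝ[X] :=
  (1 - X ^ 2) * derivative (derivative P) - C (2 * γ + 3) * X * derivative P

theorem coeff_gegenbauerOp (γ : ℝ) (P : ℝ[X]) (i : ℕ) :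
    (gegenbauerOp γ P).coeff i =
      (i + 2) * (i + 1) * P.coeff (i + 2) - i * (i + 2 * γ + 2) * P.coeff i := by
  have hX2 : (X ^ 2 * derivative (derivative P)).coeff i = i * (i - 1) * P.coeff i := by
    rw [coeff_X_pow_mul']
    rcases Nat.lt_or_ge i 2 with hi | hi
    · interval_cases i <;> simp
    · obtain ⟨j, rfl⟩ := Nat.exists_eq_add_of_le' hi
      simp only [le_add_iff_nonneg_left, zero_le, if_true, add_tsub_cancel_right,
        coeff_derivative]
      push_cast
      ring
  have hX : (X * derivative P).coeff i = i * P.coeff i := by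
    cases i with
    | zero => simp
    | succ j => rw [coeff_X_mul, coeff_derivative]; push_cast; ring
  simp only [gegenbauerOp, sub_mul, one_mul, coeff_sub, mul_assoc, coeff_C_mul, hX, hX2,
    coeff_derivative]
  push_cast
  ring

theorem degree_gegenbauerOp_lt {γ : ℝ} {P : ℝ[X]} {n : ℕ} (hP : P.degree < n) :
    (gegenbauerOp γ P).degree < n := by
  rw [degree_lt_iff_coeff_zero] at hP ⊢
  intro m hm
  rw [coeff_gegenbauerOp, hP m hm, hP (m + 2) (by omega)]
  ring

theorem intervalIntegrable_one_sub_sq_rpow {s : ℝ} (hs : -1 < s) :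
    IntervalIntegrable (fun x : ℝ => (1 - x ^ 2) ^ s) volume (-1) 1 := by
  have hright : IntervalIntegrable (fun x : ℝ => (1 - x ^ 2) ^ s) volume 0 1 := by
    have h : IntervalIntegrable (fun x : ℝ => (1 - x) ^ s * (1 + x) ^ s) volume 0 1 := by
      refine IntervalIntegrable.mul_continuousOn ?_ ?_
      · simpa using
          ((intervalIntegral.intervalIntegrable_rpow' (a := 0) (b := 1) hs).comp_sub_left 1).symm
      · refine ContinuousOn.rpow_const (by fun_prop) fun x hx => Or.inl ?_
        rw [uIcc_of_le zero_le_one] at hx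
        linarith [hx.1]
    refine h.congr fun x hx => ?_
    rw [uIoc_of_le zero_le_one] at hx
    rw [← mul_rpow (by linarith [hx.2]) (by linarith [hx.1])]
    ring_nf
  have hleft : IntervalIntegrable (fun x : ℝ => (1 - x ^ 2) ^ s) volume (-1) 0 := by
    simpa using ((IntervalIntegrable.iff_comp_neg).mp hright).symm
  exact hleft.trans hright

theorem intervalIntegrable_eval_mul_one_sub_sq_rpow {s : ℝ} (hs : -1 < s) (P : ℝ[X]) :
    IntervalIntegrable (fun x => P.eval x * (1 - x ^ 2) ^ s) volume (-1) 1 :=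
  (intervalIntegrable_one_sub_sq_rpow hs).continuousOn_mul P.continuous.continuousOn

def weightedInner (s : ℝ) (P Q : ℝ[X]) : ℝ :=
  ∫ x in (-1 : ℝ)..1, P.eval x * Q.eval x * (1 - x ^ 2) ^ s

section weightedInner

variable {s : ℝ}

theorem weightedInner_comm (P Q : ℝ[X]) : weightedInner s P Q = weightedInner s Q P := by
  simp only [weightedInner, mul_comm (P.eval _)]

theorem weightedInner_add_right (hs : -1 < s) (P Q₁ Q₂ : ℝ[X]) :
    weightedInner s P (Q₁ + Q₂) = weightedInner s P Q₁ + weightedInner s P Q₂ := by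
  simp only [weightedInner, eval_add, mul_add, add_mul]
  exact intervalIntegral.integral_add
    (by simpa using intervalIntegrable_eval_mul_one_sub_sq_rpow hs (P * Q₁))
    (by simpa using intervalIntegrable_eval_mul_one_sub_sq_rpow hs (P * Q₂))

theorem weightedInner_smul_right (c : ℝ) (P Q : ℝ[X]) :
    weightedInner s P (c • Q) = c * weightedInner s P Q := by
  simp only [weightedInner, eval_smul, smul_eq_mul, ← intervalIntegral.integral_const_mul]
  congr 1 with x
  ring

theorem weightedInner_eq_zero_of_degree_lt (hs : -1 < s) {P Q : ℝ[X]} {n : ℕ}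
    (hP : ∀ m < n, weightedInner s P (X ^ m) = 0) (hQ : Q.degree < n) :
    weightedInner s P Q = 0 := by
  classical
  rw [← mem_degreeLT, degreeLT_eq_span_X_pow] at hQ
  induction hQ using Submodule.span_induction with
  | mem Q hQ =>
    obtain ⟨m, hm, rfl⟩ := Finset.mem_image.mp hQ
    exact hP m (Finset.mem_range.mp hm)
  | zero => simp [weightedInner]
  | add Q₁ Q₂ _ _ h₁ h₂ => rw [weightedInner_add_right hs, h₁, h₂, add_zero]
  | smul c Q _ h => rw [weightedInner_smul_right, h, mul_zero]

theorem eq_zero_of_weightedInner_self_eq_zero (hs : -1 < s) {R : ℝ[X]}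
    (hR : weightedInner s R R = 0) : R = 0 := by
  have hpos : ∀ x ∈ Ioo (-1 : ℝ) 1, 0 < 1 - x ^ 2 := fun x hx => by nlinarith [hx.1, hx.2]
  have hae : (fun x => R.eval x * R.eval x * (1 - x ^ 2) ^ s)
      =ᵐ[volume.restrict (Ioc (-1) 1)] 0 := by
    refine (intervalIntegral.integral_eq_zero_iff_of_le_of_nonneg_ae (by norm_num) ?_
      (by simpa using intervalIntegrable_eval_mul_one_sub_sq_rpow hs (R * R))).mp hR
    filter_upwards [ae_restrict_mem measurableSet_Ioc] with x hx
    exact mul_nonneg (mul_self_nonneg _) (rpow_nonneg (by nlinarith [hx.1, hx.2]) _)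
  have hzero : EqOn (fun x => R.eval x * R.eval x * (1 - x ^ 2) ^ s) 0 (Ioo (-1) 1) :=
    Measure.eqOn_open_of_ae_eq (ae_restrict_of_ae_restrict_of_subset Ioo_subset_Ioc_self hae)
      isOpen_Ioo ((R.continuous.mul R.continuous).continuousOn.mul
        (ContinuousOn.rpow_const (by fun_prop) fun x hx => Or.inl (hpos x hx).ne'))
      continuousOn_const
  refine eq_zero_of_infinite_isRoot R ((Ioo_infinite (by norm_num : (-1 : ℝ) < 1)).mono
    fun x hx => ?_)
  simpa only [Pi.zero_apply, mul_eq_zero, or_self, (rpow_pos_of_pos (hpos x hx) s).ne',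
    or_false, mem_ofPred_eq, IsRoot.def] using hzero hx

end weightedInner

theorem hasDerivAt_one_sub_sq_rpow_mul_wronskian (γ : ℝ) (P Q : ℝ[X]) {x : ℝ}
    (hx : x ∈ Ioo (-1 : ℝ) 1) :
    HasDerivAt (fun x => (1 - x ^ 2) ^ (γ + 3 / 2) *
        ((derivative P).eval x * Q.eval x - P.eval x * (derivative Q).eval x))
      ((gegenbauerOp γ P * Q - P * gegenbauerOp γ Q).eval x * (1 - x ^ 2) ^ (γ + 1 / 2)) x := by
  have hpos : 0 < 1 - x ^ 2 := by nlinarith [hx.1, hx.2]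
  have hweight : HasDerivAt (fun x : ℝ => (1 - x ^ 2) ^ (γ + 3 / 2))
      ((γ + 3 / 2) * (1 - x ^ 2) ^ (γ + 1 / 2) * -(2 * x)) x := by
    have h := ((hasDerivAt_pow 2 x).const_sub 1).rpow_const (p := γ + 3 / 2) (Or.inl hpos.ne')
    rw [show γ + 3 / 2 - 1 = γ + 1 / 2 by ring] at h
    exact h.congr_deriv (by push_cast; ring)
  have hwronskian := ((derivative P).hasDerivAt x).mul (Q.hasDerivAt x) |>.sub
    ((P.hasDerivAt x).mul ((derivative Q).hasDerivAt x))
  refine (hweight.mul hwronskian).congr_deriv ?_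
  rw [show γ + 3 / 2 = γ + 1 / 2 + 1 by ring, rpow_add_one hpos.ne']
  simp only [Pi.mul_apply, Pi.sub_apply, gegenbauerOp, eval_sub, eval_mul, eval_one, eval_pow,
    eval_X, eval_C]
  ring

theorem weightedInner_gegenbauerOp_comm {γ : ℝ} (hγ : -3 / 2 < γ) (P Q : ℝ[X]) :
    weightedInner (γ + 1 / 2) (gegenbauerOp γ P) Q =
      weightedInner (γ + 1 / 2) P (gegenbauerOp γ Q) := by
  have hs : -1 < γ + 1 / 2 := by linarith
  have hcont : ContinuousOn (fun x : ℝ => (1 - x ^ 2) ^ (γ + 3 / 2) *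
      ((derivative P).eval x * Q.eval x - P.eval x * (derivative Q).eval x)) (Icc (-1) 1) :=
    (ContinuousOn.rpow_const (by fun_prop) fun _ _ => Or.inr (by linarith)).mul (by fun_prop)
  have hboundary :=
    intervalIntegral.integral_eq_sub_of_hasDeriv_right_of_le (by norm_num) hcont
      (fun x hx => (hasDerivAt_one_sub_sq_rpow_mul_wronskian γ P Q hx).hasDerivWithinAt)
      (intervalIntegrable_eval_mul_one_sub_sq_rpow hs _)
  have hvanish : (0 : ℝ) ^ (γ + 3 / 2) = 0 := zero_rpow (by linarith)
  simp only [one_pow, neg_one_sq, sub_self, hvanish, zero_mul] at hboundary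
  rw [← sub_eq_zero, ← hboundary, weightedInner, weightedInner,
    ← intervalIntegral.integral_sub
      (by simpa using intervalIntegrable_eval_mul_one_sub_sq_rpow hs (gegenbauerOp γ P * Q))
      (by simpa using intervalIntegrable_eval_mul_one_sub_sq_rpow hs (P * gegenbauerOp γ Q))]
  congr 1 with x
  rw [eval_sub, eval_mul, eval_mul]
  ring

theorem gegenbauerOp_eq_of_monic_orthogonal {γ : ℝ} (hγ : -3 / 2 < γ) {P : ℝ[X]} {n : ℕ}
    (hmonic : P.Monic) (hdeg : P.natDegree = n)
    (hortho : ∀ m < n, weightedInner (γ + 1 / 2) P (X ^ m) = 0) :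
    gegenbauerOp γ P = -(n * (n + 2 * γ + 2) : ℝ) • P := by
  have hs : -1 < γ + 1 / 2 := by linarith
  set R := gegenbauerOp γ P + (n * (n + 2 * γ + 2) : ℝ) • P
  have hRdeg : R.degree < n := by
    refine (degree_lt_iff_coeff_zero R n).mpr fun m hm => ?_
    have hP2 : P.coeff (m + 2) = 0 := coeff_eq_zero_of_natDegree_lt (by omega)
    simp only [R, coeff_add, coeff_smul, coeff_gegenbauerOp, hP2, smul_eq_mul]
    rcases hm.eq_or_lt with rfl | hlt
    · rw [← hdeg, hmonic.coeff_natDegree, hdeg]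
      ring
    · rw [coeff_eq_zero_of_natDegree_lt (hdeg ▸ hlt)]
      ring
  have hRortho : ∀ m < n, weightedInner (γ + 1 / 2) R (X ^ m) = 0 := fun m hm => by
    have hop : weightedInner (γ + 1 / 2) P (gegenbauerOp γ (X ^ m)) = 0 :=
      weightedInner_eq_zero_of_degree_lt hs hortho
        (degree_gegenbauerOp_lt ((degree_X_pow_le m).trans_lt (by exact_mod_cast hm)))
    rw [weightedInner_comm, weightedInner_add_right hs, weightedInner_smul_right,
      weightedInner_comm, weightedInner_gegenbauerOp_comm hγ, hop, weightedInner_comm,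
      hortho m hm]
    ring
  rw [neg_smul]
  exact eq_neg_of_add_eq_zero_left (eq_zero_of_weightedInner_self_eq_zero hs
    (weightedInner_eq_zero_of_degree_lt hs hRortho hRdeg))

theorem hasDerivAt_cos_rpow_mul_eval_sin (r : ℝ) (P : ℝ[X]) {a : ℝ} (ha : 0 < Real.cos a) :
    HasDerivAt (fun a => Real.cos a ^ (r + 1) * P.eval (Real.sin a))
      (-(Real.cos a ^ r * ((r + 1) * Real.sin a * P.eval (Real.sin a) -
        Real.cos a ^ 2 * (derivative P).eval (Real.sin a)))) a := by
  have hpow := (Real.hasDerivAt_cos a).rpow_const (p := r + 1) (Or.inl ha.ne')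
  rw [add_sub_cancel_right] at hpow
  refine (hpow.mul ((P.hasDerivAt _).comp a (Real.hasDerivAt_sin a))).congr_deriv ?_
  rw [rpow_add_one ha.ne', Function.comp_apply]
  ring

/-- The differentiated function is `-cos^{-2γ} a` times the derivative of
`cos^{2γ+1} a · P(sin a)`, see `hasDerivAt_cos_rpow_mul_eval_sin`. -/
theorem hasDerivAt_flux_of_gegenbauerOp_eq {γ c : ℝ} {P : ℝ[X]}
    (hP : gegenbauerOp γ P = c • P) (a : ℝ) :
    HasDerivAt (fun a => (2 * γ + 1) * Real.sin a * P.eval (Real.sin a) -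
        Real.cos a ^ 2 * (derivative P).eval (Real.sin a))
      (Real.cos a * ((2 * γ + 1 - c) * P.eval (Real.sin a))) a := by
  have hode := congrArg (eval (Real.sin a)) hP
  simp only [gegenbauerOp, eval_sub, eval_mul, eval_one, eval_pow, eval_X, eval_C, eval_smul,
    smul_eq_mul] at hode
  have hsin := Real.hasDerivAt_sin a
  refine (((hsin.const_mul _).mul ((P.hasDerivAt _).comp a hsin)).sub
    (((Real.hasDerivAt_cos a).pow 2).mul
      (((derivative P).hasDerivAt _).comp a hsin))).congr_deriv ?_
  simp only [Function.comp_apply, Pi.pow_apply]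
  linear_combination (-Real.cos a) * hode -
    Real.cos a * (derivative (derivative P)).eval (Real.sin a) * Real.sin_sq_add_cos_sq a

theorem dBeta_comp_add_mul {E : ℝ → ℂ} {f : ℝ → ℝ} {β α : ℝ}
    (hE : DifferentiableAt ℝ E (β + α)) :
    dBeta (fun q => E (q.1 + q.2) * (f q.2 : ℂ)) (β, α) = deriv E (β + α) * f α :=
  ((hE.hasDerivAt.comp_add_const β α).mul_const (f α : ℂ)).deriv

theorem Tline_comp_add_mul {E : ℝ → ℂ} {f : ℝ → ℝ} {f' β α : ℝ}
    (hE : DifferentiableAt ℝ E (β + α)) (hf : HasDerivAt f f' α) :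
    Tline (fun q => E (q.1 + q.2) * (f q.2 : ℂ)) (β, α) = -(E (β + α) * f') := by
  rw [Tline, dBeta_comp_add_mul hE]
  change _ - deriv (fun a => E (β + a) * (f a : ℂ)) α = _
  rw [show deriv (fun a => E (β + a) * (f a : ℂ)) α = _ from
    ((hE.hasDerivAt.comp_const_add β α).mul hf.ofReal_comp).deriv]
  ring

theorem Tline_congr {g₁ g₂ : ℝ × ℝ → ℂ} {p : ℝ × ℝ} (h : g₁ =ᶠ[𝓝 p] g₂) :
    Tline g₁ p = Tline g₂ p := by
  unfold Tline dBeta dAlpha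
  congr 1
  · exact (h.comp_tendsto ((continuous_id.prodMk continuous_const).tendsto' p.1 p rfl)).deriv_eq
  · exact (h.comp_tendsto ((continuous_const.prodMk continuous_id).tendsto' p.2 p rfl)).deriv_eq

theorem Tgam_comp_add_mul {γ β α v' : ℝ} {E : ℝ → ℂ} {f v : ℝ → ℝ}
    (hE : Differentiable ℝ E) (hα : 0 < Real.cos α)
    (hf : ∀ᶠ a in 𝓝 α, HasDerivAt f (-(Real.cos a ^ (2 * γ) * v a)) a)
    (hv : HasDerivAt v v' α) :
    Tgam γ (fun q => E (q.1 + q.2) * (f q.2 : ℂ)) (β, α) =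
      E (β + α) * ((Real.cos α ^ (2 * γ) * v' + γ ^ 2 * f α : ℝ) : ℂ) := by
  have hflux : (fun q => muC (-(2 * γ)) q * Tline (fun q => E (q.1 + q.2) * (f q.2 : ℂ)) q)
      =ᶠ[𝓝 (β, α)] fun q => E (q.1 + q.2) * (v q.2 : ℂ) := by
    have hnear :
        ∀ᶠ a in 𝓝 α, 0 < Real.cos a ∧ HasDerivAt f (-(Real.cos a ^ (2 * γ) * v a)) a :=
      (continuousAt_const.eventually_lt Real.continuous_cos.continuousAt hα).and hf
    filter_upwards [(continuous_snd.tendsto (β, α)).eventually hnear]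
      with ⟨b, a⟩ ⟨hcos, hfa⟩
    rw [Tline_comp_add_mul (hE _) hfa, muC, rpow_neg hcos.le]
    have : ((Real.cos a ^ (2 * γ) : ℝ) : ℂ) ≠ 0 :=
      ofReal_ne_zero.mpr (rpow_pos_of_pos hcos _).ne'
    push_cast
    field_simp
  rw [Tgam, Tline_congr hflux, Tline_comp_add_mul (hE _) hv, muC]
  push_cast
  ring

/-- On the interior of `∂₊S𝔻`, the functions `ψ_{n,k}^γ` satisfy the joint
eigenequations `𝓣_γ ψ_{n,k}^γ = (n+1+γ)² ψ_{n,k}^γ` and `(1/i) ∂_β ψ_{n,k}^γ = (n-2k) ψ_{n,k}^γ`. -/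
theorem psi_joint_eigenfunctions (γ : ℝ) (hγ : -1 < γ)
    (L : ℕ → Polynomial ℝ) (hL : IsMonicOrtho γ L) (n : ℕ) (k : ℤ) :
    ∀ p : ℝ × ℝ, p.2 ∈ Set.Ioo (-(π / 2)) (π / 2) →
      Tgam γ (psiF γ L n k) p = ((((n : ℝ) + 1 + γ) ^ 2 : ℝ) : ℂ) * psiF γ L n k p ∧
      Complex.I⁻¹ * dBeta (psiF γ L n k) p = ((n : ℂ) - 2 * (k : ℂ)) * psiF γ L n k p := by
  rintro ⟨β, α⟩ hα
  have hcos : 0 < Real.cos α := cos_pos_of_mem_Ioo hα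
  set m : ℂ := (n : ℂ) - 2 * (k : ℂ)
  set E : ℝ → ℂ := fun t => (((-1 : ℝ) ^ n / (2 * π) : ℝ) : ℂ) * cexp (I * m * t)
  have hE : ∀ t, HasDerivAt E (I * m * E t) t := fun t =>
    (((hasDerivAt_id t).ofReal_comp.const_mul (I * m)).cexp.const_mul _).congr_deriv (by
      simp only [E, id, ofReal_one]; ring)
  set u : ℝ → ℝ := fun a => Real.cos a ^ (2 * γ + 1) * (L n).eval (Real.sin a) with hu
  have hψ : psiF γ L n k = fun q => E (q.1 + q.2) * (u q.2 : ℂ) := by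
    funext q
    simp only [psiF, E, u]
    push_cast
    ring
  obtain ⟨hmonic, hdeg, hortho⟩ := hL n
  have hode := gegenbauerOp_eq_of_monic_orthogonal (show -3 / 2 < γ by linarith) hmonic hdeg
    fun m hm => by simpa [weightedInner] using hortho m hm
  simp only [hψ]
  constructor
  · rw [Tgam_comp_add_mul (fun t => (hE t).differentiableAt) hcos
      (eventually_of_mem (continuousAt_const.eventually_lt Real.continuous_cos.continuousAt hcos)
        fun a ha => hasDerivAt_cos_rpow_mul_eval_sin (2 * γ) (L n) ha)
      (hasDerivAt_flux_of_gegenbauerOp_eq hode α)]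
    simp only [hu, rpow_add_one hcos.ne']
    push_cast
    ring
  · rw [dBeta_comp_add_mul (hE _).differentiableAt, (hE _).deriv]
    field_simp

end
end

section
/- Fix γ > −1. For every n ≥ 0 and every k ∈ ℤ, the function I₀^♯(μ^{−2γ−1}ψ_{n,k}^γ)(z) = (1/2π)∫₀^{2π} e^{i(n−2k)θ} L_n^γ(−ρ sin(θ−ω)) dθ (z = ρe^{iω} ∈ 𝔻) vanishes identically on 𝔻 if and only if k < 0 or k > n. -/
open MeasureTheory Complex Metric Real Set

/-! Writing `sin θ = (e^{iθ} - e^{-iθ}) / 2i`, the `m`-th Fourier coefficient of `sin^j` vanishes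
for `j < |m|`, while for `j = n`, `m = n - 2k` it is a nonzero multiple of `C(n, k)` exactly when
`0 ≤ k ≤ n`. Off the null set where `cos (θ - ω) = 0` we have `cos α₋ > 0`,
`sin α₋ = -ρ sin (θ - ω)` and `β₋ + α₋ ≡ θ - π`, which gives the integral formula; shifting
`θ ↦ θ + ω` turns it into `e^{i(n-2k)ω} / 2π` times a polynomial in `ρ` whose `j`-th coefficient is
the `j`-th coefficient of `L_n` times the `(n-2k)`-th Fourier coefficient of `sin^j`. Since `L_n` is
monic of degree `n`, this polynomial vanishes on `[0, 1]` iff `k < 0` or `k > n`. -/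

noncomputable section

open Polynomial

lemma integral_exp_I_mul_int_mul (r : ℤ) :
    ∫ θ in (0:ℝ)..(2 * π), exp (I * r * θ) = if r = 0 then ((2 * π : ℝ) : ℂ) else 0 := by
  split_ifs with hr
  · simp [hr]
  · have hc : I * (r : ℂ) ≠ 0 := by simp [hr]
    have hperiod : exp (I * r * ((2 * π : ℝ) : ℂ)) = 1 := by
      rw [show I * (r : ℂ) * ((2 * π : ℝ) : ℂ) = r * (2 * π * I) by push_cast; ring]
      exact exp_int_mul_two_pi_mul_I r
    rw [integral_exp_mul_complex hc, hperiod]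
    simp

lemma ofReal_sin_eq_exp_sub_exp (θ : ℝ) :
    ((Real.sin θ : ℝ) : ℂ) = (exp (θ * I) - exp (-θ * I)) / (2 * I) := by
  rw [ofReal_sin, Complex.sin]
  field_simp
  ring_nf
  rw [I_sq]
  ring

def sinMoment (M : ℤ) (j : ℕ) : ℂ :=
  ∫ θ in (0:ℝ)..(2 * π), exp (I * M * θ) * ((Real.sin θ : ℝ) : ℂ) ^ j

lemma sinMoment_eq (M : ℤ) (j : ℕ) :
    sinMoment M j = (2 * I)⁻¹ ^ j * ∑ l ∈ Finset.range (j + 1),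
      (-1) ^ (l + j) * (j.choose l : ℂ) * if M + 2 * l - j = 0 then ((2 * π : ℝ) : ℂ) else 0 := by
  have hexpand : ∀ θ : ℝ, exp (I * M * θ) * ((Real.sin θ : ℝ) : ℂ) ^ j =
      (2 * I)⁻¹ ^ j * ∑ l ∈ Finset.range (j + 1),
        (-1) ^ (l + j) * (j.choose l : ℂ) * exp (I * ((M + 2 * l - j : ℤ) : ℂ) * θ) := by
    intro θ
    rw [ofReal_sin_eq_exp_sub_exp, div_eq_mul_inv, mul_pow, sub_pow, Finset.sum_mul,
      Finset.mul_sum, Finset.mul_sum]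
    refine Finset.sum_congr rfl fun l hl => ?_
    have hlj : l ≤ j := Nat.lt_succ_iff.mp (Finset.mem_range.mp hl)
    rw [← Complex.exp_nat_mul, ← Complex.exp_nat_mul]
    have : exp (I * M * θ) * exp (l * (θ * I)) * exp ((j - l : ℕ) * (-θ * I)) =
        exp (I * ((M + 2 * l - j : ℤ) : ℂ) * θ) := by
      rw [← Complex.exp_add, ← Complex.exp_add]
      push_cast [Nat.cast_sub hlj]
      ring_nf
    rw [← this]
    ring
  rw [sinMoment, intervalIntegral.integral_congr fun θ _ => hexpand θ,
    intervalIntegral.integral_const_mul, intervalIntegral.integral_finsetSum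
      fun l _ => (Continuous.intervalIntegrable (by fun_prop) _ _)]
  simp only [intervalIntegral.integral_const_mul, integral_exp_I_mul_int_mul]

lemma sinMoment_eq_zero_of_lt_natAbs {M : ℤ} {j : ℕ} (h : j < M.natAbs) : sinMoment M j = 0 := by
  rw [sinMoment_eq, Finset.sum_eq_zero, mul_zero]
  intro l hl
  have hlj : l ≤ j := Nat.lt_succ_iff.mp (Finset.mem_range.mp hl)
  rw [if_neg (by omega), mul_zero]

lemma sinMoment_sub_two_mul_ne_zero {n : ℕ} {k : ℤ} (h0 : 0 ≤ k) (hk : k ≤ n) :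
    sinMoment (n - 2 * k) n ≠ 0 := by
  lift k to ℕ using h0
  have hkn : k ≤ n := by exact_mod_cast hk
  rw [sinMoment_eq, Finset.sum_eq_single_of_mem k (Finset.mem_range.mpr (Nat.lt_succ_of_le hkn))]
  · rw [if_pos (by ring)]
    have : (n.choose k : ℂ) ≠ 0 := by exact_mod_cast (Nat.choose_pos hkn).ne'
    simp [this, pi_ne_zero]
  · intro l _ hlk
    rw [if_neg (by omega), mul_zero]

def sinMomentPoly (M : ℤ) (P : ℝ[X]) : ℂ[X] :=
  ∑ j ∈ Finset.range (P.natDegree + 1), C (P.coeff j * sinMoment M j) * X ^ j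

lemma coeff_sinMomentPoly (M : ℤ) (P : ℝ[X]) (j : ℕ) :
    (sinMomentPoly M P).coeff j = P.coeff j * sinMoment M j := by
  rw [sinMomentPoly, finsetSum_coeff]
  simp only [coeff_C_mul_X_pow]
  rw [Finset.sum_ite_eq]
  split_ifs with hj
  · rfl
  · rw [coeff_eq_zero_of_natDegree_lt (by simpa [Nat.lt_succ_iff] using hj)]
    simp

lemma integral_exp_mul_eval_mul_sin (M : ℤ) (P : ℝ[X]) (c : ℝ) :
    ∫ θ in (0:ℝ)..(2 * π), exp (I * M * θ) * ((P.eval (c * Real.sin θ) : ℝ) : ℂ) =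
      (sinMomentPoly M P).eval (c : ℂ) := by
  simp only [eval_eq_sum_range (p := P), ofReal_sum, ofReal_mul, ofReal_pow, Finset.mul_sum]
  rw [intervalIntegral.integral_finsetSum fun j _ =>
    (Continuous.intervalIntegrable (by fun_prop) _ _), sinMomentPoly, eval_finsetSum]
  refine Finset.sum_congr rfl fun j _ => ?_
  have : ∀ θ : ℝ, exp (I * M * θ) * ((P.coeff j : ℂ) * ((c : ℂ) * (Real.sin θ : ℂ)) ^ j) =
      ((P.coeff j : ℂ) * (c : ℂ) ^ j) * (exp (I * M * θ) * ((Real.sin θ : ℝ) : ℂ) ^ j) := by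
    intro θ; ring
  simp only [this, intervalIntegral.integral_const_mul, eval_mul, eval_C, eval_pow, eval_X]
  rw [sinMoment]
  ring

lemma integral_exp_mul_comp_sub_of_periodic (M : ℤ) {f : ℝ → ℂ} (hf : Function.Periodic f (2 * π))
    (ω : ℝ) :
    ∫ θ in (0:ℝ)..(2 * π), exp (I * M * θ) * f (θ - ω) =
      exp (I * M * ω) * ∫ θ in (0:ℝ)..(2 * π), exp (I * M * θ) * f θ := by
  have hperiodic : Function.Periodic (fun θ : ℝ => exp (I * M * θ) * f θ) (2 * π) := by
    intro θ
    simp only [hf θ, ofReal_add, mul_add, Complex.exp_add]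
    rw [show I * (M : ℂ) * ((2 * π : ℝ) : ℂ) = M * (2 * π * I) by push_cast; ring,
      exp_int_mul_two_pi_mul_I, mul_one]
  have hsplit : ∀ θ : ℝ, exp (I * M * θ) * f (θ - ω) =
      exp (I * M * ω) * (exp (I * M * ((θ - ω : ℝ) : ℂ)) * f (θ - ω)) := by
    intro θ
    rw [← mul_assoc, ← Complex.exp_add]
    push_cast
    ring_nf
  simp only [hsplit, intervalIntegral.integral_const_mul]
  rw [intervalIntegral.integral_comp_sub_right (fun θ => exp (I * M * θ) * f θ),
    zero_sub, show 2 * π - ω = -ω + 2 * π by ring, hperiodic.intervalIntegral_add_eq (-ω) 0, zero_add]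

lemma integral_exp_mul_eval_mul_sin_sub (M : ℤ) (P : ℝ[X]) (c ω : ℝ) :
    ∫ θ in (0:ℝ)..(2 * π), exp (I * M * θ) * ((P.eval (c * Real.sin (θ - ω)) : ℝ) : ℂ) =
      exp (I * M * ω) * (sinMomentPoly M P).eval (c : ℂ) := by
  rw [integral_exp_mul_comp_sub_of_periodic M (f := fun θ => ((P.eval (c * Real.sin θ) : ℝ) : ℂ))
    (fun θ => by simp only [Real.sin_periodic θ]), integral_exp_mul_eval_mul_sin]

lemma sinMomentPoly_eq_zero_iff {P : ℝ[X]} (hP : P.Monic) {n : ℕ} (hn : P.natDegree = n)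
    (k : ℤ) : sinMomentPoly (n - 2 * k) P = 0 ↔ k < 0 ∨ (n : ℤ) < k := by
  constructor
  · intro hzero
    have hcoeff := coeff_sinMomentPoly (n - 2 * k) P n
    rw [hzero, coeff_zero, ← hn, hP.coeff_natDegree, hn, Complex.ofReal_one,
      one_mul] at hcoeff
    by_contra hk
    exact sinMoment_sub_two_mul_ne_zero (by omega) (by omega) hcoeff.symm
  · intro hk
    ext j
    rw [coeff_sinMomentPoly, coeff_zero]
    rcases le_or_gt j n with hj | hj
    · rw [sinMoment_eq_zero_of_lt_natAbs (by omega), mul_zero]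
    · rw [coeff_eq_zero_of_natDegree_lt (hn ▸ hj), Complex.ofReal_zero, zero_mul]

lemma exists_wrap_eq_sub_int_mul (x : ℝ) : ∃ d : ℤ, wrap x = x - d * (2 * π) :=
  ⟨_, by rw [wrap, ← self_sub_toIocDiv_zsmul, zsmul_eq_mul]⟩

lemma im_mul_exp_neg_mul_I (z : ℂ) (θ : ℝ) :
    (z * exp (-(θ : ℂ) * I)).im = -‖z‖ * Real.sin (θ - z.arg) := by
  conv_lhs => rw [← norm_mul_exp_arg_mul_I z]
  rw [mul_assoc, ← Complex.exp_add,
    show (z.arg : ℂ) * I + -(θ : ℂ) * I = ((z.arg - θ : ℝ) : ℂ) * I by push_cast; ring,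
    im_ofReal_mul, exp_ofReal_mul_I_im, ← neg_sub, Real.sin_neg, mul_neg, neg_mul]

lemma sin_alpham {z : ℂ} (hz : ‖z‖ ≤ 1) (θ : ℝ) :
    Real.sin (alpham z θ) = -‖z‖ * Real.sin (θ - z.arg) := by
  have hbound : |-‖z‖ * Real.sin (θ - z.arg)| ≤ 1 := by
    rw [abs_mul, abs_neg, abs_norm]
    exact mul_le_one₀ hz (abs_nonneg _) (abs_sin_le_one _)
  rw [alpham, im_mul_exp_neg_mul_I, Real.sin_arcsin (abs_le.mp hbound).1 (abs_le.mp hbound).2]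

lemma cos_alpham_pos {z : ℂ} (hz : ‖z‖ ≤ 1) {θ : ℝ} (hθ : Real.cos (θ - z.arg) ≠ 0) :
    0 < Real.cos (alpham z θ) := by
  rw [alpham, im_mul_exp_neg_mul_I, Real.cos_arcsin, Real.sqrt_pos]
  have hcos : 0 < Real.cos (θ - z.arg) ^ 2 := by positivity
  have hz2 : ‖z‖ ^ 2 ≤ 1 := pow_le_one₀ (norm_nonneg z) hz
  nlinarith [Real.sin_sq_add_cos_sq (θ - z.arg),
    mul_le_mul_of_nonneg_right hz2 (sq_nonneg (Real.sin (θ - z.arg)))]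

/-- Here `β₋ + α₋ ≡ θ - π` modulo `2π`, and `n - 2k ≡ n` modulo `2`. -/
lemma exp_mul_wrap_betam_add_alpham (n : ℕ) (k : ℤ) (z : ℂ) (θ : ℝ) :
    exp (I * ((n : ℂ) - 2 * (k : ℂ)) * ((wrap (betam z θ) + alpham z θ : ℝ) : ℂ)) =
      (-1) ^ n * exp (I * ((n : ℂ) - 2 * (k : ℂ)) * θ) := by
  obtain ⟨d, hd⟩ := exists_wrap_eq_sub_int_mul (betam z θ)
  have hwrap : wrap (betam z θ) + alpham z θ = θ - π - d * (2 * π) := by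
    rw [hd, betam]
    ring
  rw [hwrap, show I * ((n : ℂ) - 2 * (k : ℂ)) * ((θ - π - d * (2 * π) : ℝ) : ℂ) =
      I * ((n : ℂ) - 2 * (k : ℂ)) * θ + n * (π * I) + ((k - n - (n - 2 * k) * d : ℤ) : ℂ) * (2 * π * I)
      by push_cast; ring,
    Complex.exp_add, Complex.exp_add, Complex.exp_nat_mul, exp_pi_mul_I, exp_int_mul_two_pi_mul_I]
  ring

lemma ae_cos_sub_ne_zero (ω : ℝ) : ∀ᵐ θ : ℝ, Real.cos (θ - ω) ≠ 0 := by
  have hzeros : {θ : ℝ | Real.cos (θ - ω) = 0} ⊆ range fun j : ℤ => ω + (2 * j + 1) * π / 2 := by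
    intro θ hθ
    obtain ⟨j, hj⟩ := Real.cos_eq_zero_iff.mp hθ
    exact ⟨j, by linarith⟩
  simpa only [ae_iff, not_not] using measure_mono_null hzeros ((countable_range _).measure_zero _)

lemma cos_rpow_mul_psiF_wrap_betam (γ : ℝ) (L : ℕ → ℝ[X]) (n : ℕ) (k : ℤ) {z : ℂ}
    (hz : ‖z‖ ≤ 1) {θ : ℝ} (hθ : Real.cos (θ - z.arg) ≠ 0) :
    ((Real.cos (alpham z θ) ^ (-(2 * γ) - 1) : ℝ) : ℂ) *
        psiF γ L n k (wrap (betam z θ), alpham z θ) =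
      ((1 / (2 * π) : ℝ) : ℂ) * (exp (I * ((n : ℂ) - 2 * (k : ℂ)) * θ) *
        (((L n).eval (-‖z‖ * Real.sin (θ - z.arg)) : ℝ) : ℂ)) := by
  have hcancel : Real.cos (alpham z θ) ^ (-(2 * γ) - 1) * Real.cos (alpham z θ) ^ (2 * γ + 1) = 1 := by
    rw [← Real.rpow_add (cos_alpham_pos hz hθ), show -(2 * γ) - 1 + (2 * γ + 1) = 0 by ring,
      Real.rpow_zero]
  have hcancelC := congrArg (fun x : ℝ => (x : ℂ)) hcancel
  simp only [ofReal_mul, ofReal_one] at hcancelC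
  rw [psiF, exp_mul_wrap_betam_add_alpham, sin_alpham hz]
  have hsign : ((-1 : ℂ) ^ n) ^ 2 = 1 := by rw [← pow_mul, pow_mul']; norm_num
  set e := exp (I * ((n : ℂ) - 2 * (k : ℂ)) * θ)
  set v := (((L n).eval (-‖z‖ * Real.sin (θ - z.arg)) : ℝ) : ℂ)
  push_cast
  linear_combination (((-1) ^ n) ^ 2 / (2 * (π : ℂ)) * e * v) * hcancelC +
    (e * v / (2 * (π : ℂ))) * hsign

lemma BPW_psiF_eq (γ : ℝ) (L : ℕ → ℝ[X]) (n : ℕ) (k : ℤ) {z : ℂ}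
    (hz : z ∈ closedBall (0 : ℂ) 1) :
    BPW γ (psiF γ L n k) z = ((1 / (2 * π) : ℝ) : ℂ) * ∫ θ in (0:ℝ)..(2 * π),
      exp (I * ((n : ℂ) - 2 * (k : ℂ)) * θ) *
        (((L n).eval (-‖z‖ * Real.sin (θ - z.arg)) : ℝ) : ℂ) := by
  rw [← intervalIntegral.integral_const_mul]
  refine intervalIntegral.integral_congr_ae ?_
  filter_upwards [ae_cos_sub_ne_zero z.arg] with θ hθ _
  exact cos_rpow_mul_psiF_wrap_betam γ L n k (mem_closedBall_zero_iff.mp hz) hθ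

lemma forall_BPW_psiF_eq_zero_iff (γ : ℝ) (L : ℕ → ℝ[X]) (n : ℕ) (k : ℤ) :
    (∀ z ∈ closedBall (0 : ℂ) 1, BPW γ (psiF γ L n k) z = 0) ↔
      sinMomentPoly (n - 2 * k) (L n) = 0 := by
  have hM : ((n : ℂ) - 2 * (k : ℂ)) = ((n - 2 * k : ℤ) : ℂ) := by push_cast; ring
  have hBPW : ∀ z ∈ closedBall (0 : ℂ) 1, BPW γ (psiF γ L n k) z =
      ((1 / (2 * π) : ℝ) : ℂ) * (exp (I * ((n - 2 * k : ℤ) : ℂ) * z.arg) *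
        (sinMomentPoly (n - 2 * k) (L n)).eval ((-‖z‖ : ℝ) : ℂ)) := by
    intro z hz
    rw [BPW_psiF_eq γ L n k hz, hM, integral_exp_mul_eval_mul_sin_sub]
  have hfactor : ∀ z : ℂ, ((1 / (2 * π) : ℝ) : ℂ) * exp (I * ((n - 2 * k : ℤ) : ℂ) * z.arg) ≠ 0 :=
    fun z => mul_ne_zero (by simp [pi_ne_zero]) (Complex.exp_ne_zero _)
  constructor
  · intro hvanish
    refine eq_zero_of_infinite_isRoot _ ((Icc_infinite (neg_one_lt_zero (R := ℝ))).image
      ofReal_injective.injOn |>.mono ?_)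
    rintro _ ⟨x, hx, rfl⟩
    have hz : ((-x : ℝ) : ℂ) ∈ closedBall (0 : ℂ) 1 := by
      rw [mem_closedBall_zero_iff, norm_real, Real.norm_eq_abs, abs_le]
      constructor <;> linarith [hx.1, hx.2]
    have hnorm : -‖((-x : ℝ) : ℂ)‖ = x := by
      rw [norm_real, Real.norm_eq_abs, abs_of_nonneg (by linarith [hx.2]), neg_neg]
    have h := hvanish _ hz
    rw [hBPW _ hz, ← mul_assoc, hnorm] at h
    exact (mul_eq_zero.mp h).resolve_left (hfactor _)
  · intro hzero z hz
    rw [hBPW z hz, hzero, eval_zero, mul_zero, mul_zero]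

theorem backprojected_psi_vanishes_iff_general (γ : ℝ)
    (L : ℕ → Polynomial ℝ) (hL : IsMonicOrtho γ L) (n : ℕ) (k : ℤ) :
    (∀ z ∈ Metric.closedBall (0 : ℂ) 1,
      BPW γ (psiF γ L n k) z
        = ((1 / (2 * π) : ℝ) : ℂ) * ∫ θ in (0:ℝ)..(2 * π),
            Complex.exp (Complex.I * ((n : ℂ) - 2 * (k : ℂ)) * (θ : ℂ)) *
              (((L n).eval (-‖z‖ * Real.sin (θ - z.arg)) : ℝ) : ℂ)) ∧
    ((∀ z ∈ Metric.closedBall (0 : ℂ) 1, BPW γ (psiF γ L n k) z = 0) ↔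
      (k < 0 ∨ (n : ℤ) < k)) :=
  ⟨fun _ hz => BPW_psiF_eq γ L n k hz,
    (forall_BPW_psiF_eq_zero_iff γ L n k).trans (sinMomentPoly_eq_zero_iff (hL n).1 (hL n).2.1 k)⟩

/-- The backprojected functions
`I₀^♯(μ^{-2γ-1} ψ_{n,k}^γ)(z) = (1/2π) ∫₀^{2π} e^{i(n-2k)θ} L_n^γ(-ρ sin(θ-ω)) dθ` (`z = ρe^{iω}`)
vanish identically on `𝔻` if and only if `k < 0` or `k > n`. -/
theorem backprojected_psi_vanishes_iff (γ : ℝ) (hγ : -1 < γ)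
    (L : ℕ → Polynomial ℝ) (hL : IsMonicOrtho γ L) (n : ℕ) (k : ℤ) :
    (∀ z ∈ Metric.closedBall (0 : ℂ) 1,
      BPW γ (psiF γ L n k) z
        = ((1 / (2 * π) : ℝ) : ℂ) * ∫ θ in (0:ℝ)..(2 * π),
            Complex.exp (Complex.I * ((n : ℂ) - 2 * (k : ℂ)) * (θ : ℂ)) *
              (((L n).eval (-‖z‖ * Real.sin (θ - z.arg)) : ℝ) : ℂ)) ∧
    ((∀ z ∈ Metric.closedBall (0 : ℂ) 1, BPW γ (psiF γ L n k) z = 0) ↔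
      (k < 0 ∨ (n : ℤ) < k)) :=
  backprojected_psi_vanishes_iff_general γ L hL n k

end
end

section
/- Fix γ > −1. There exist constants C₁, C₂ > 0 (depending on γ) such that for all n ≥ 0 and 0 ≤ k ≤ n: C₁(n+1)^{min(−1, −1−γ)} ≤ (σ_{n,k}^γ)² ≤ C₂(n+1)^{max(−1, −1−γ)}. -/
open MeasureTheory Complex Metric Real Set

noncomputable section

/-!
Write `n = k + j` and `r_δ(m) = Γ(m + δ + 1) / m!`. Splitting `binom(n, k) = n! / (k! j!)` gives
`(σ_{n,k}^γ)² = 2^{2γ+2} π r_γ(k) r_γ(j) / r_{2γ+1}(n)`. Euler's limit formula for `Γ` gives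
`r_δ(m) ≍ (m + 1)^δ`, uniformly in `m` since both sides are positive, hence
`(σ_{n,k}^γ)² ≍ ((k + 1)(j + 1))^γ / (n + 1)^{2γ+1}`. Finally `n + 1 ≤ (k + 1)(j + 1) ≤ (n + 1)²`,
so `((k + 1)(j + 1))^γ` lies between `(n + 1)^γ` and `(n + 1)^{2γ}`.
-/

open Filter Topology Asymptotics
open scoped Nat

namespace Real

lemma Gamma_add_nat_add_one_eq_mul_prod {s : ℝ} (hs : 0 < s) (n : ℕ) :
    Gamma (s + n + 1) = Gamma s * ∏ j ∈ Finset.range (n + 1), (s + j) := by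
  induction n with
  | zero => simp [Gamma_add_one hs.ne', mul_comm]
  | succ n ih =>
    rw [Finset.prod_range_succ, ← mul_assoc, ← ih, Nat.cast_succ, ← add_assoc,
      Gamma_add_one (by positivity)]
    ring

lemma tendsto_Gamma_add_nat_add_one_div_rpow_mul_factorial {s : ℝ} (hs : 0 < s) :
    Tendsto (fun n : ℕ => Gamma (s + n + 1) / (n ^ s * n !)) atTop (𝓝 1) := by
  have hΓ := (Gamma_pos_of_pos hs).ne'
  have hSeq (n : ℕ) : Gamma (s + n + 1) / (n ^ s * n !) = Gamma s / GammaSeq s n := by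
    rw [GammaSeq, div_div_eq_mul_div, Gamma_add_nat_add_one_eq_mul_prod hs]
  simp_rw [hSeq]
  have := (tendsto_const_nhds (x := Gamma s)).div (GammaSeq_tendsto_Gamma s) hΓ
  rwa [div_self hΓ] at this

lemma tendsto_Gamma_nat_add_div_factorial_mul_rpow {δ : ℝ} (hδ : -1 < δ) :
    Tendsto (fun m : ℕ => Gamma (m + δ + 1) / (m ! * ((m : ℝ) + 1) ^ δ)) atTop (𝓝 1) := by
  have hEuler := tendsto_Gamma_add_nat_add_one_div_rpow_mul_factorial (s := δ + 1) (by linarith)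
  have hshift : Tendsto (fun m : ℕ => (m : ℝ) / (m + (δ + 1))) atTop (𝓝 1) :=
    tendsto_natCast_div_add_atTop _
  have hbase : Tendsto (fun m : ℕ => ((m : ℝ) / (m + 1)) ^ δ) atTop (𝓝 1) := by
    have := (continuousAt_rpow_const 1 δ (Or.inl one_ne_zero)).tendsto.comp
      (tendsto_natCast_div_add_atTop (1 : ℝ))
    rwa [one_rpow] at this
  -- for `m > 0`, `Γ(m + δ + 1) / (m! (m + 1)^δ)` is the product of the three ratios above
  have := hEuler.mul (hshift.mul hbase)
  rw [one_mul, one_mul] at this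
  refine this.congr' ?_
  filter_upwards [eventually_gt_atTop 0] with m hm
  have hm : (0 : ℝ) < m := by exact_mod_cast hm
  have hmδ : (m : ℝ) + (δ + 1) ≠ 0 := by linarith
  have hrec : Gamma (δ + 1 + m + 1) = (m + δ + 1) * Gamma (m + δ + 1) := by
    rw [← Gamma_add_one (by linarith)]
    ring_nf
  rw [hrec, div_rpow hm.le (by positivity), rpow_add hm, rpow_one]
  field_simp
  ring

lemma rpow_div_rpow_mem_of_le_of_le_sq {N P : ℝ} (hN : 0 < N) (h₁ : N ≤ P) (h₂ : P ≤ N ^ 2)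
    (γ : ℝ) :
    N ^ min (-1 : ℝ) (-1 - γ) ≤ P ^ γ / N ^ (2 * γ + 1) ∧
      P ^ γ / N ^ (2 * γ + 1) ≤ N ^ max (-1 : ℝ) (-1 - γ) := by
  have hP : 0 < P := hN.trans_le h₁
  have hsq : (N ^ 2) ^ γ = N ^ (2 * γ) := by
    rw [← rpow_natCast, ← rpow_mul hN.le, Nat.cast_ofNat]
  have hγ : N ^ γ / N ^ (2 * γ + 1) = N ^ (-1 - γ) := by rw [← rpow_sub hN]; ring_nf
  have h2γ : N ^ (2 * γ) / N ^ (2 * γ + 1) = N ^ (-1 : ℝ) := by rw [← rpow_sub hN]; ring_nf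
  have hden : 0 ≤ N ^ (2 * γ + 1) := by positivity
  rcases le_total 0 γ with hγ₀ | hγ₀
  · rw [min_eq_right (by linarith), max_eq_left (by linarith), ← hγ, ← h2γ, ← hsq]
    exact ⟨div_le_div_of_nonneg_right (rpow_le_rpow hN.le h₁ hγ₀) hden,
      div_le_div_of_nonneg_right (rpow_le_rpow hP.le h₂ hγ₀) hden⟩
  · rw [min_eq_left (by linarith), max_eq_right (by linarith), ← hγ, ← h2γ, ← hsq]
    exact ⟨div_le_div_of_nonneg_right (rpow_le_rpow_of_nonpos hP h₂ hγ₀) hden,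
      div_le_div_of_nonneg_right (rpow_le_rpow_of_nonpos hN h₁ hγ₀) hden⟩

end Real

namespace Asymptotics

lemma IsTheta.nat_top_of_atTop {E F : Type*} [NormedAddCommGroup E] [NormedAddCommGroup F]
    {f : ℕ → E} {g : ℕ → F} (h : f =Θ[atTop] g) (hf : ∀ n, f n ≠ 0) (hg : ∀ n, g n ≠ 0) :
    f =Θ[⊤] g :=
  ⟨h.1.nat_of_atTop (by simp [hg]), h.2.nat_of_atTop (by simp [hf])⟩

lemma IsTheta.comp_tendsto {α β E F : Type*} [Norm E] [Norm F] {f : α → E} {g : α → F}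
    {l : Filter α} {l' : Filter β} (h : f =Θ[l] g) {k : β → α} (hk : Tendsto k l' l) :
    (f ∘ k) =Θ[l'] (g ∘ k) :=
  ⟨h.1.comp_tendsto hk, h.2.comp_tendsto hk⟩

lemma IsTheta.exists_pos_bounds {α : Type*} {f g : α → ℝ} (h : f =Θ[⊤] g)
    (hf : ∀ x, 0 < f x) (hg : ∀ x, 0 < g x) :
    ∃ c C : ℝ, 0 < c ∧ 0 < C ∧ ∀ x, c * g x ≤ f x ∧ f x ≤ C * g x := by
  obtain ⟨C, hC, hfg⟩ := h.1.exists_pos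
  obtain ⟨D, hD, hgf⟩ := h.2.exists_pos
  rw [isBigOWith_top] at hfg hgf
  refine ⟨D⁻¹, C, inv_pos.2 hD, hC, fun x => ⟨?_, ?_⟩⟩
  · rw [inv_mul_le_iff₀ hD]
    simpa [Real.norm_of_nonneg (hf x).le, Real.norm_of_nonneg (hg x).le] using hgf x
  · simpa [Real.norm_of_nonneg (hf x).le, Real.norm_of_nonneg (hg x).le] using hfg x

end Asymptotics

def gammaRatio (δ : ℝ) (m : ℕ) : ℝ := Real.Gamma (m + δ + 1) / m !

lemma gammaRatio_pos {δ : ℝ} (hδ : -1 < δ) (m : ℕ) : 0 < gammaRatio δ m :=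
  div_pos (Real.Gamma_pos_of_pos (by linarith [m.cast_nonneg (α := ℝ)])) (by positivity)

lemma isTheta_top_gammaRatio {δ : ℝ} (hδ : -1 < δ) :
    gammaRatio δ =Θ[⊤] fun m => ((m : ℝ) + 1) ^ δ := by
  refine IsTheta.nat_top_of_atTop ?_ (fun m => (gammaRatio_pos hδ m).ne') (fun m => by positivity)
  refine (isTheta_of_div_tendsto_nhds_ne_zero (c := 1) ?_ one_ne_zero).symm
  simpa only [gammaRatio, div_div] using Real.tendsto_Gamma_nat_add_div_factorial_mul_rpow hδ

lemma sigSq_add_eq (γ : ℝ) (k j : ℕ) :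
    sigSq γ (k + j) k =
      2 ^ (2 * γ + 2) * π * (gammaRatio γ k * gammaRatio γ j / gammaRatio (2 * γ + 1) (k + j)) := by
  have hk : (k ! : ℝ) ≠ 0 := by positivity
  have hj : (j ! : ℝ) ≠ 0 := by positivity
  rw [sigSq, gammaRatio, gammaRatio, gammaRatio, Nat.cast_choose ℝ (Nat.le_add_right k j),
    Nat.add_sub_cancel_left, show ((k + j : ℕ) : ℝ) - k + γ + 1 = j + γ + 1 by push_cast; ring,
    show ((k + j : ℕ) : ℝ) + 2 * γ + 2 = (k + j : ℕ) + (2 * γ + 1) + 1 by ring]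
  field_simp

lemma sigSq_add_pos {γ : ℝ} (hγ : -1 < γ) (k j : ℕ) : 0 < sigSq γ (k + j) k := by
  rw [sigSq_add_eq]
  have := gammaRatio_pos hγ k
  have := gammaRatio_pos hγ j
  have := gammaRatio_pos (δ := 2 * γ + 1) (by linarith) (k + j)
  positivity

lemma isTheta_top_sigSq {γ : ℝ} (hγ : -1 < γ) :
    (fun p : ℕ × ℕ => sigSq γ (p.1 + p.2) p.1) =Θ[⊤] fun p =>
      (((p.1 : ℝ) + 1) * ((p.2 : ℝ) + 1)) ^ γ / (((p.1 + p.2 : ℕ) : ℝ) + 1) ^ (2 * γ + 1) := by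
  have hX := isTheta_top_gammaRatio hγ
  have hZ := isTheta_top_gammaRatio (δ := 2 * γ + 1) (by linarith)
  have h := ((hX.comp_tendsto (l' := ⊤) (k := Prod.fst) tendsto_top).mul
    (hX.comp_tendsto (k := Prod.snd) tendsto_top)).div
    (hZ.comp_tendsto (k := fun p : ℕ × ℕ => p.1 + p.2) tendsto_top)
  simp only [funext fun p : ℕ × ℕ => sigSq_add_eq γ p.1 p.2,
    Real.mul_rpow (Nat.cast_add_one_pos _).le (Nat.cast_add_one_pos _).le]
  exact h.const_mul_left (by positivity)

/-- There are constants `C₁, C₂ > 0` (depending on `γ`) with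
`C₁ (n+1)^{min(-1, -1-γ)} ≤ (σ_{n,k}^γ)² ≤ C₂ (n+1)^{max(-1, -1-γ)}` for all `n ≥ 0`,
`0 ≤ k ≤ n`. -/
theorem sigSq_asymptotics (γ : ℝ) (hγ : -1 < γ) :
    ∃ C₁ C₂ : ℝ, 0 < C₁ ∧ 0 < C₂ ∧ ∀ n k : ℕ, k ≤ n →
      C₁ * ((n : ℝ) + 1) ^ (min (-1 : ℝ) (-1 - γ)) ≤ sigSq γ n k ∧
      sigSq γ n k ≤ C₂ * ((n : ℝ) + 1) ^ (max (-1 : ℝ) (-1 - γ)) := by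
  obtain ⟨c, C, hc, hC, hbounds⟩ := (isTheta_top_sigSq hγ).exists_pos_bounds
    (fun p => sigSq_add_pos hγ p.1 p.2) (fun p => by positivity)
  refine ⟨c, C, hc, hC, fun n k hkn => ?_⟩
  obtain ⟨j, rfl⟩ := Nat.exists_eq_add_of_le hkn
  have hk : (0 : ℝ) ≤ k := k.cast_nonneg
  have hj : (0 : ℝ) ≤ j := j.cast_nonneg
  have h₁ : ((k + j : ℕ) : ℝ) + 1 ≤ ((k : ℝ) + 1) * ((j : ℝ) + 1) := by
    push_cast; nlinarith
  have h₂ : ((k : ℝ) + 1) * ((j : ℝ) + 1) ≤ (((k + j : ℕ) : ℝ) + 1) ^ 2 := by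
    push_cast; nlinarith
  obtain ⟨hlow, hhigh⟩ := Real.rpow_div_rpow_mem_of_le_of_le_sq (by positivity) h₁ h₂ γ
  obtain ⟨hc_le, hle_C⟩ := hbounds (k, j)
  exact ⟨(mul_le_mul_of_nonneg_left hlow hc.le).trans hc_le,
    hle_C.trans (mul_le_mul_of_nonneg_left hhigh hC.le)⟩

end
end
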